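/- arXiv:1908.10741 — 2 statements merged into one kernel-verified Lean document; each statement's English description precedes it below -/
import Mathlib

section
/- Let (Σ,σ) be a countable Markov shift and let (a_j), (b_j) be sequences of natural numbers with a₀ = b₀ and a_j ≤ b_j for all j. Then the associated quantities satisfy δ̂_∞(K((b_j))) ≤ δ̂_∞(K((a_j))), where δ̂_∞(K) := limsup_{n→∞} (1/n) log ẑ_n(K) and ẑ_n(K) is the minimal number of cylinders of length n+2 covering the set T̂_n(K). -/
open Filter MeasureTheory Set Topology
open scoped ENNReal NNReal

namespace CMSPaper

/-- The countable Markov shift over alphabet `ℕ` with transition matrix `Mtr`. -/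
abbrev Shift (Mtr : ℕ → ℕ → Prop) := {x : ℕ → ℕ // ∀ i, Mtr (x i) (x (i + 1))}

variable (Mtr : ℕ → ℕ → Prop)

/-- The shift map. -/
def shiftMap (x : Shift Mtr) : Shift Mtr := ⟨fun i => x.val (i + 1), fun i => x.prop (i + 1)⟩

/-- The cylinder determined by a finite word `w`. -/
def cylF {n : ℕ} (w : Fin n → ℕ) : Set (Shift Mtr) := {x | ∀ i : Fin n, x.val i = w i}

/-- `C` is a (nonempty-length) cylinder set. -/
def IsCylinder (C : Set (Shift Mtr)) : Prop := ∃ (n : ℕ) (w : Fin (n + 1) → ℕ), C = cylF Mtr w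

/-- The cylinder of length `n` containing `x`. -/
def cylOf (x : Shift Mtr) (n : ℕ) : Set (Shift Mtr) := {y | ∀ i < n, y.val i = x.val i}

/-- Topological transitivity: any two realized symbols are connected by an admissible word. -/
def IsTransitive : Prop :=
  ∀ a b : ℕ, (∃ x : Shift Mtr, x.val 0 = a) → (∃ x : Shift Mtr, x.val 0 = b) →
    ∃ (x : Shift Mtr) (n : ℕ), 0 < n ∧ x.val 0 = a ∧ x.val n = b

/-- The entropy of a countable partition (indexed family) with respect to `μ`. -/
noncomputable def partEnt {X : Type*} [MeasurableSpace X] (μ : Measure X)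
    {ι : Type*} (β : ι → Set X) : ℝ≥0∞ :=
  ∑' i, ENNReal.ofReal (Real.negMulLog ((μ (β i)).toReal))

/-- The dynamical refinement `β ∨ T⁻¹β ∨ ⋯ ∨ T⁻⁽ⁿ⁻¹⁾β` of a partition. -/
def refinedPart {X : Type*} (T : X → X) (β : ℕ → Set X) (n : ℕ) : (Fin n → ℕ) → Set X :=
  fun w => {x | ∀ k : Fin n, T^[(k : ℕ)] x ∈ β (w k)}

/-- The entropy of `μ` with respect to the partition `β`. -/
noncomputable def entOfPart {X : Type*} [MeasurableSpace X] (T : X → X) (μ : Measure X)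
    (β : ℕ → Set X) : ℝ≥0∞ :=
  atTop.liminf fun n => partEnt μ (refinedPart T β n) / (n : ℝ≥0∞)

/-- Kolmogorov–Sinai entropy: supremum over countable measurable partitions of finite entropy. -/
noncomputable def ksEntropy {X : Type*} [MeasurableSpace X] (T : X → X) (μ : Measure X) : ℝ≥0∞ :=
  ⨆ (β : ℕ → Set X) (_ : ∀ i, MeasurableSet (β i)) (_ : Pairwise (Function.onFun Disjoint β))
    (_ : μ (⋃ i, β i)ᶜ = 0) (_ : partEnt μ β ≠ ⊤), entOfPart T μ β

/-- Exponential growth rate (`limsup (1/n) log uₙ`), valued in `EReal`. -/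
noncomputable def growthSup (u : ℕ → ℝ≥0∞) : EReal :=
  atTop.limsup fun n : ℕ => (((n : ℝ)⁻¹ : ℝ) : EReal) * ENNReal.log (u n)

/-- The number `z_n(M,q)` of cylinders `[x₀,…,x_{n+1}]` with `x₀ ≤ q`, `x_{n+1} ≤ q` and at most
`(n+2)/M` coordinates `≤ q`. -/
noncomputable def zCount (q M n : ℕ) : ℝ≥0∞ :=
  ({w : Fin (n + 2) → ℕ | (∃ x : Shift Mtr, ∀ i : Fin (n + 2), x.val i = w i) ∧
    w 0 ≤ q ∧ w (Fin.last (n + 1)) ≤ q ∧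
    M * ({i : Fin (n + 2) | w i ≤ q}).ncard ≤ n + 2}.encard : ℕ∞)

/-- `δ_∞(M,q)`. -/
noncomputable def deltaMQ (M q : ℕ) : EReal := growthSup fun n => zCount Mtr q M n

/-- The topological entropy at infinity `δ_∞ = inf_{M,q} δ_∞(M,q)`. -/
noncomputable def deltaInf : EReal := ⨅ (M : ℕ) (q : ℕ), deltaMQ Mtr M q

/-- Number of periodic points of period `n` starting with symbol `a`. -/
noncomputable def perCount (a n : ℕ) : ℝ≥0∞ :=
  ({x : Shift Mtr | (shiftMap Mtr)^[n] x = x ∧ x.val 0 = a}.encard : ℕ∞)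

/-- Gurevich entropy computed at the symbol `a`. -/
noncomputable def gurevichEntropy (a : ℕ) : EReal := growthSup (perCount Mtr a)

/-- The topological (Gurevich) entropy. -/
noncomputable def topEnt : EReal := ⨆ a : ℕ, gurevichEntropy Mtr a

/-- Birkhoff sum. -/
noncomputable def birk (φ : Shift Mtr → ℝ) (n : ℕ) (x : Shift Mtr) : ℝ :=
  ∑ k ∈ Finset.range n, φ ((shiftMap Mtr)^[k] x)

/-- Gurevich partition function `Z_n(φ,a)`. -/
noncomputable def Zab (φ : Shift Mtr → ℝ) (a n : ℕ) : ℝ≥0∞ :=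
  ∑' x : {x : Shift Mtr // (shiftMap Mtr)^[n] x = x ∧ x.val 0 = a},
    ENNReal.ofReal (Real.exp (birk Mtr φ n x.val))

/-- Gurevich pressure computed at the symbol `a`. -/
noncomputable def pressure (φ : Shift Mtr → ℝ) (a : ℕ) : EReal :=
  atTop.limsup fun n : ℕ => (((n : ℝ)⁻¹ : ℝ) : EReal) * ENNReal.log (Zab Mtr φ a n)

/-- `var_n(φ)`. -/
noncomputable def varn (φ : Shift Mtr → ℝ) (n : ℕ) : ℝ :=
  sSup {r : ℝ | ∃ x y : Shift Mtr, (∀ i < n, x.val i = y.val i) ∧ r = |φ x - φ y|}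

/-- `φ` has summable variations. -/
def SummableVars (φ : Shift Mtr → ℝ) : Prop := Summable fun n : ℕ => varn Mtr φ (n + 2)

/-- Convergence on cylinders of a sequence of measures to a measure. -/
def CylTendsto (μ : ℕ → Measure (Shift Mtr)) (ν : Measure (Shift Mtr)) : Prop :=
  ∀ (n : ℕ) (w : Fin (n + 1) → ℕ),
    Tendsto (fun k => μ k (cylF Mtr w)) atTop (𝓝 (ν (cylF Mtr w)))

/-- The measure-theoretic entropy at infinity `h_∞`. -/
noncomputable def hInfty : EReal :=
  sSup {h : EReal | ∃ μ : ℕ → Measure (Shift Mtr),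
    (∀ n, IsProbabilityMeasure (μ n)) ∧ (∀ n, (μ n).map (shiftMap Mtr) = μ n) ∧
    CylTendsto Mtr μ 0 ∧
    h = atTop.limsup fun n : ℕ => (ksEntropy (shiftMap Mtr) (μ n) : EReal)}

/-- Minimal number of length-`n` cylinders covering a set of `μ`-measure at least `1 - δ`. -/
noncomputable def coverCount [MeasurableSpace (Shift Mtr)] (μ : Measure (Shift Mtr)) (n : ℕ)
    (δ : ℝ) : ℝ≥0∞ :=
  ⨅ (F : Finset (Fin n → ℕ))
    (_ : 1 - ENNReal.ofReal δ ≤ μ (⋃ w ∈ F, cylF Mtr w)), (F.card : ℝ≥0∞)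

/-- The F-property. -/
def FProp : Prop :=
  ∀ (a n : ℕ), {w : Fin (n + 1) → ℕ |
    (∀ i : Fin n, Mtr (w i.castSucc) (w i.succ)) ∧ w 0 = a ∧ w (Fin.last n) = a}.Finite


/-- `K((aᵢ)) = {x : xᵢ ≤ aᵢ ∀ i}`. -/
def Kseq (A : ℕ → ℕ) : Set (Shift Mtr) := {x | ∀ i, x.val i ≤ A i}

/-- `i(x) = min {n : xₙ > aₙ}`. -/
noncomputable def escIdx (A : ℕ → ℕ) (x : Shift Mtr) : ℕ := sInf {n | A n < x.val n}

/-- `T_n(K) = K_{a₀} ∩ σ⁻¹Kᶜ ∩ ⋯ ∩ σ⁻ⁿKᶜ ∩ σ^{-(n+1)}K_{a₀}`. -/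
def Tn (A : ℕ → ℕ) (n : ℕ) : Set (Shift Mtr) :=
  {x | x.val 0 ≤ A 0 ∧ (∀ k, 1 ≤ k → k ≤ n → (shiftMap Mtr)^[k] x ∉ Kseq Mtr A) ∧
    ((shiftMap Mtr)^[n + 1] x).val 0 ≤ A 0}

/-- `T̂_n(K) = {x ∈ T_n(K) : i(σᵏx) ≤ n - k for 1 ≤ k ≤ n}`. -/
def Tnhat (A : ℕ → ℕ) (n : ℕ) : Set (Shift Mtr) :=
  {x ∈ Tn Mtr A n | ∀ k, 1 ≤ k → k ≤ n → escIdx Mtr A ((shiftMap Mtr)^[k] x) ≤ n - k}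

/-- `ẑ_n(K)`: minimal number of cylinders of length `n+2` needed to cover `T̂_n(K)`. -/
noncomputable def zhat (A : ℕ → ℕ) (n : ℕ) : ℝ≥0∞ :=
  ⨅ (F : Finset (Fin (n + 2) → ℕ)) (_ : Tnhat Mtr A n ⊆ ⋃ w ∈ F, cylF Mtr w),
    (F.card : ℝ≥0∞)

/-- `δ̂_∞(K) = limsup (1/n) log ẑ_n(K)`. -/
noncomputable def deltaHat (A : ℕ → ℕ) : EReal := growthSup (zhat Mtr A)

/-- monotonicity `δ̂_∞(K((bⱼ))) ≤ δ̂_∞(K((aⱼ)))` when `a₀ = b₀` and `aⱼ ≤ bⱼ`. -/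
theorem deltaHat_antitone (Mtr : ℕ → ℕ → Prop) (a b : ℕ → ℕ)
    (h0 : a 0 = b 0) (hle : ∀ j, a j ≤ b j) :
    deltaHat Mtr b ≤ deltaHat Mtr a := by
  have hsub : ∀ n, Tnhat Mtr b n ⊆ Tnhat Mtr a n := by
    intro n x hx
    obtain ⟨⟨h1, h2, h3⟩, h4⟩ := hx
    refine ⟨⟨h0 ▸ h1, fun k hk1 hk2 hK => h2 k hk1 hk2 fun i => le_trans (hK i) (hle i),
      h0 ▸ h3⟩, fun k hk1 hk2 => le_trans (csInf_le_csInf (OrderBot.bddBelow _) ?_ ?_)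
        (h4 k hk1 hk2)⟩
    · have := h2 k hk1 hk2
      simp only [Kseq, Set.mem_setOf_eq, not_forall, not_le] at this
      obtain ⟨m, hm⟩ := this
      exact ⟨m, hm⟩
    · intro m hm
      exact lt_of_le_of_lt (hle m) hm
  have hz : ∀ n, zhat Mtr b n ≤ zhat Mtr a n := by
    intro n
    refine le_iInf₂ fun F hF => iInf₂_le F ((hsub n).trans hF)
  refine Filter.limsup_le_limsup (Filter.Eventually.of_forall fun n => ?_)
  rcases Nat.eq_zero_or_pos n with rfl | hn
  · simp
  · exact mul_le_mul_of_nonneg_left (by rw [ENNReal.log_le_log_iff]; exact hz n)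
      (EReal.coe_nonneg.mpr (by positivity))

end CMSPaper
end

section
/- Let (Σ,σ) be a transitive countable Markov shift with finite topological entropy and let φ : Σ → ℝ be a bounded potential of summable variations such that lim_{n→∞} sup_{x ∈ [n]} |φ(x)| = 0. Then the Gurevich pressure satisfies P_G(φ) ≥ δ_∞, the topological entropy at infinity of (Σ,σ). -/
open Filter MeasureTheory Set Topology
open scoped ENNReal NNReal

namespace CMSPaper

variable (Mtr : ℕ → ℕ → Prop)

/-!
Fix a real `r` above `P_G(φ)` at `a` and `ε > 0`. Choose `q` with `|φ| ≤ ε` on every `[m]`, `m > q`,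
and `M` with `sup |φ| ≤ M ε`. A word counted by `z_n(M,q)` starts and ends in `{0, …, q}`, so by
transitivity it closes up into a periodic orbit through `a` using connecting words of lengths
`j, k ≤ L(q)`. Since the word visits `{0, …, q}` at most `(n+2)/M` times, the Birkhoff sum along
this orbit is at least `-(const + 2nε)`. Recording `(j, k)` makes the construction injective, so
`z_n(M,q) ≤ e^{const + 2nε} ∑_{j,k ≤ L} Z_{n+1+j+k}(φ,a)`, and hence
`δ_∞ ≤ δ_∞(M,q) ≤ r + 2ε`.
-/

section

open Finset

variable {Mtr}

lemma shiftMap_iterate_val (k : ℕ) (x : Shift Mtr) (i : ℕ) :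
    ((shiftMap Mtr)^[k] x).val i = x.val (i + k) := by
  induction k generalizing x with
  | zero => rfl
  | succ k ih =>
    rw [Function.iterate_succ_apply, ih]
    exact congrArg x.val (by omega)

def splice (x : Shift Mtr) (j : ℕ) (y : Shift Mtr) (h : x.val j = y.val 0) : Shift Mtr :=
  ⟨fun i => if i < j then x.val i else y.val (i - j), by
    intro i
    by_cases hij : i + 1 < j
    · simpa [hij, show i < j by omega] using x.prop i
    by_cases hi : i < j
    · obtain rfl : j = i + 1 := by omega
      simpa [hi, ← h] using x.prop i
    · simpa [hi, hij, show i + 1 - j = i - j + 1 by omega] using y.prop (i - j)⟩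

lemma splice_val_of_le {x y : Shift Mtr} {j : ℕ} (h : x.val j = y.val 0) {i : ℕ} (hi : i ≤ j) :
    (splice x j y h).val i = x.val i := by
  rcases hi.lt_or_eq with hi | rfl
  · simp [splice, hi]
  · simp [splice, h]

lemma splice_val_add {x y : Shift Mtr} {j : ℕ} (h : x.val j = y.val 0) (i : ℕ) :
    (splice x j y h).val (j + i) = y.val i := by
  simp [splice]

def periodize (z : Shift Mtr) (m : ℕ) (h : z.val m = z.val 0) : Shift Mtr :=
  ⟨fun i => z.val (i % m), by
    intro i
    rcases Nat.eq_zero_or_pos m with rfl | hm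
    · simpa using z.prop i
    show Mtr (z.val (i % m)) (z.val ((i + 1) % m))
    rw [← Nat.mod_add_mod]
    rcases Nat.lt_or_ge (i % m + 1) m with hlt | hge
    · rw [Nat.mod_eq_of_lt hlt]; exact z.prop _
    · have heq : i % m + 1 = m := le_antisymm (Nat.mod_lt i hm) hge
      simpa [heq, h] using z.prop (i % m)⟩

lemma periodize_val {z : Shift Mtr} {m : ℕ} (h : z.val m = z.val 0) (i : ℕ) :
    (periodize z m h).val i = z.val (i % m) := rfl

lemma shiftMap_iterate_periodize {z : Shift Mtr} {m : ℕ} (h : z.val m = z.val 0) :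
    (shiftMap Mtr)^[m] (periodize z m h) = periodize z m h := by
  ext i
  simp [shiftMap_iterate_val, periodize_val]

variable (Mtr) in
def ReachesWithin (L a b : ℕ) : Prop :=
  ∃ x : Shift Mtr, ∃ j, 0 < j ∧ j ≤ L ∧ x.val 0 = a ∧ x.val j = b

lemma ReachesWithin.mono {L L' a b : ℕ} (h : ReachesWithin Mtr L a b) (hL : L ≤ L') :
    ReachesWithin Mtr L' a b :=
  let ⟨x, j, hj, hjL, hx0, hxj⟩ := h
  ⟨x, j, hj, hjL.trans hL, hx0, hxj⟩

lemma IsTransitive.exists_reachesWithin (hT : IsTransitive Mtr) {a : ℕ}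
    (ha : ∃ x : Shift Mtr, x.val 0 = a) (q : ℕ) :
    ∃ L, ∀ b ≤ q, (∃ x : Shift Mtr, x.val 0 = b) →
      ReachesWithin Mtr L a b ∧ ReachesWithin Mtr L b a := by
  have hLb : ∀ b, ∃ L, (∃ x : Shift Mtr, x.val 0 = b) →
      ReachesWithin Mtr L a b ∧ ReachesWithin Mtr L b a := by
    intro b
    by_cases hb : ∃ x : Shift Mtr, x.val 0 = b
    · obtain ⟨x, j, hj, hx0, hxj⟩ := hT a b ha hb
      obtain ⟨y, k, hk, hy0, hyk⟩ := hT b a hb ha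
      exact ⟨max j k, fun _ =>
        ⟨⟨x, j, hj, le_max_left _ _, hx0, hxj⟩, ⟨y, k, hk, le_max_right _ _, hy0, hyk⟩⟩⟩
    · exact ⟨0, fun h => absurd h hb⟩
  choose Lb hLb using hLb
  refine ⟨(range (q + 1)).sup Lb, fun b hb hreal => ?_⟩
  have hle : Lb b ≤ (range (q + 1)).sup Lb := le_sup (mem_range.2 (by omega))
  exact ⟨(hLb b hreal).1.mono hle, (hLb b hreal).2.mono hle⟩

lemma exists_periodic_through {a q L n : ℕ}
    (hL : ∀ b ≤ q, (∃ x : Shift Mtr, x.val 0 = b) →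
      ReachesWithin Mtr L a b ∧ ReachesWithin Mtr L b a)
    (x : Shift Mtr) (hx0 : x.val 0 ≤ q) (hxn : x.val (n + 1) ≤ q) :
    ∃ jk ∈ Finset.Icc 1 L ×ˢ Finset.Icc 1 L, ∃ p : Shift Mtr,
      (shiftMap Mtr)^[n + 1 + jk.1 + jk.2] p = p ∧ p.val 0 = a ∧
      ∀ i < n + 2, p.val (jk.1 + i) = x.val i := by
  obtain ⟨⟨X₁, j, hj, hjL, hX₁a, hX₁j⟩, -⟩ := hL _ hx0 ⟨x, rfl⟩
  obtain ⟨-, ⟨X₂, k, hk, hkL, hX₂0, hX₂a⟩⟩ :=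
    hL _ hxn ⟨(shiftMap Mtr)^[n + 1] x, by rw [shiftMap_iterate_val, zero_add]⟩
  set y := splice x (n + 1) X₂ hX₂0.symm
  have hy0 : y.val 0 = x.val 0 := splice_val_of_le _ (Nat.zero_le _)
  set z := splice X₁ j y (hX₁j.trans hy0.symm)
  have hz0 : z.val 0 = a := (splice_val_of_le _ (Nat.zero_le _)).trans hX₁a
  have hz : z.val (n + 1 + j + k) = z.val 0 := by
    rw [show n + 1 + j + k = j + (n + 1 + k) by ring, splice_val_add, splice_val_add, hX₂a, hz0]
  refine ⟨(j, k), mem_product.2 ⟨mem_Icc.2 ⟨hj, hjL⟩, mem_Icc.2 ⟨hk, hkL⟩⟩,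
    periodize z _ hz, shiftMap_iterate_periodize hz, ?_, fun i hi => ?_⟩
  · rw [periodize_val, Nat.zero_mod, hz0]
  · rw [periodize_val, Nat.mod_eq_of_lt (by omega), splice_val_add, splice_val_of_le _ (by omega)]

lemma card_filter_range_le {P : ℕ → Prop} [DecidablePred P] {j l m : ℕ} (h : j + l ≤ m) :
    #{i ∈ range m | P i} ≤ #{i ∈ range l | P (j + i)} + (m - l) := by
  classical
  set W := (range l).image (j + ·)
  have hW : W ⊆ range m := by
    intro i hi
    obtain ⟨a, ha, rfl⟩ := mem_image.1 hi
    exact Finset.mem_range.2 (by rw [Finset.mem_range] at ha; omega)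
  calc #{i ∈ range m | P i}
      ≤ #({i ∈ range l | P (j + i)}.image (j + ·) ∪ (range m \ W)) := by
        refine card_le_card fun i hi => ?_
        simp only [mem_filter, Finset.mem_range] at hi
        by_cases hiW : j ≤ i ∧ i < j + l
        · refine Finset.mem_union_left _ (mem_image.2 ⟨i - j, ?_, by omega⟩)
          rw [mem_filter, Finset.mem_range, show j + (i - j) = i by omega]
          exact ⟨by omega, hi.2⟩
        · refine Finset.mem_union_right _ (mem_sdiff.2 ⟨Finset.mem_range.2 hi.1, ?_⟩)
          intro hiW'
          obtain ⟨a, ha, rfl⟩ := Finset.mem_image.1 hiW'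
          exact hiW ⟨by omega, by rw [Finset.mem_range] at ha; omega⟩
    _ ≤ #{i ∈ range l | P (j + i)} + (m - l) := by
        refine (Finset.card_union_le _ _).trans (add_le_add card_image_le (le_of_eq ?_))
        rw [card_sdiff_of_subset hW, card_range,
          Finset.card_image_of_injective _ (add_right_injective j), card_range]

lemma ncard_setOf_fin_eq_card_filter_range (N : ℕ) (P : ℕ → Prop) [DecidablePred P] :
    {i : Fin N | P i}.ncard = #{i ∈ range N | P i} := by
  rw [← Set.ncard_image_of_injective _ Fin.val_injective, ← Set.ncard_coe_finset]
  congr 1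
  ext i
  simp only [Set.mem_image, coe_filter, Finset.mem_range]
  exact ⟨fun ⟨a, ha, e⟩ => e ▸ ⟨a.2, ha⟩, fun ⟨hi, hP⟩ => ⟨⟨i, hi⟩, hP, rfl⟩⟩

lemma encard_le_tsum_of_injective {α β : Type*} {s : Set α} {g : β → ℝ≥0∞}
    (F : s → β) (hF : Function.Injective F) (hle : ∀ w, 1 ≤ g (F w)) :
    (s.encard : ℝ≥0∞) ≤ ∑' b, g b :=
  calc (s.encard : ℝ≥0∞) = ∑' _ : s, 1 := by rw [ENNReal.tsum_set_const, mul_one]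
    _ ≤ ∑' w : s, g (F w) := ENNReal.tsum_le_tsum hle
    _ ≤ ∑' b, g b := ENNReal.tsum_comp_le_tsum_of_injective hF g

lemma neg_le_birk {φ : Shift Mtr → ℝ} {c ε : ℝ} {q : ℕ} (hc : ∀ y, |φ y| ≤ c)
    (hε : ∀ y : Shift Mtr, q < y.val 0 → |φ y| ≤ ε) (hε0 : 0 ≤ ε) (m : ℕ) (p : Shift Mtr) :
    -(c * #{i ∈ range m | p.val i ≤ q} + ε * m) ≤ birk Mtr φ m p := by
  have hterm : ∀ i ∈ range m,
      -((if p.val i ≤ q then c else 0) + ε) ≤ φ ((shiftMap Mtr)^[i] p) := by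
    intro i _
    have h0 : ((shiftMap Mtr)^[i] p).val 0 = p.val i := by rw [shiftMap_iterate_val, zero_add]
    have := neg_abs_le (φ ((shiftMap Mtr)^[i] p))
    split_ifs with hq
    · linarith [hc ((shiftMap Mtr)^[i] p)]
    · linarith [hε _ (h0 ▸ not_le.1 hq)]
  calc -(c * #{i ∈ range m | p.val i ≤ q} + ε * m)
      = ∑ i ∈ range m, -((if p.val i ≤ q then c else 0) + ε) := by
        rw [sum_neg_distrib, sum_add_distrib, ← sum_filter, sum_const, sum_const, card_range,
          nsmul_eq_mul, nsmul_eq_mul, mul_comm c, mul_comm ε]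
    _ ≤ birk Mtr φ m p := sum_le_sum hterm

variable (Mtr) in
lemma exists_zCount_eq_encard (q M n : ℕ) :
    ∃ S : Set (Fin (n + 2) → ℕ), zCount Mtr q M n = S.encard ∧
      ∀ w ∈ S, ∃ x : Shift Mtr, (∀ i : Fin (n + 2), x.val i = w i) ∧
        x.val 0 ≤ q ∧ x.val (n + 1) ≤ q ∧
        M * #{i ∈ range (n + 2) | x.val i ≤ q} ≤ n + 2 := by
  refine ⟨_, rfl, fun w ⟨⟨x, hx⟩, hw0, hwn, hlow⟩ => ⟨x, hx, ?_, ?_, ?_⟩⟩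
  · simpa [← hx] using hw0
  · simpa [← hx] using hwn
  · obtain rfl : w = fun i : Fin (n + 2) => x.val i := funext fun i => (hx i).symm
    rwa [← ncard_setOf_fin_eq_card_filter_range]

/-- The loss `2Lc` comes from the connecting words, the loss `2nε` from the at most `(n+2)/M`
visits of the middle segment to `[0, q]` and from its excursions above `q`. -/
lemma neg_le_birk_of_follows {φ : Shift Mtr → ℝ} {q L M n j k : ℕ} {c ε : ℝ}
    (hc : ∀ y, |φ y| ≤ c) (hε : ∀ y : Shift Mtr, q < y.val 0 → |φ y| ≤ ε) (hε0 : 0 ≤ ε)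
    (hM : c ≤ M * ε) (hjL : j ≤ L) (hk : 0 < k) (hkL : k ≤ L) {x p : Shift Mtr}
    (hpx : ∀ i < n + 2, p.val (j + i) = x.val i)
    (hlow : M * #{i ∈ range (n + 2) | x.val i ≤ q} ≤ n + 2) :
    -(2 * L * c + (2 * L + 3) * ε + 2 * n * ε) ≤ birk Mtr φ (n + 1 + j + k) p := by
  set m := n + 1 + j + k
  set B := #{i ∈ range (n + 2) | x.val i ≤ q}
  have hvisits : #{i ∈ range m | p.val i ≤ q} ≤ B + (m - (n + 2)) := by
    convert card_filter_range_le (P := fun i => p.val i ≤ q) (show j + (n + 2) ≤ m by omega)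
      using 3
    exact filter_congr fun i hi => by rw [hpx i (Finset.mem_range.1 hi)]
  have hvisits' : (#{i ∈ range m | p.val i ≤ q} : ℝ) ≤ B + 2 * L := by
    exact_mod_cast hvisits.trans (by omega)
  have hc0 : 0 ≤ c := (abs_nonneg _).trans (hc p)
  have hB : c * B ≤ (n + 2) * ε :=
    calc c * B ≤ M * ε * B := mul_le_mul_of_nonneg_right hM (Nat.cast_nonneg _)
      _ = (M * B : ℕ) * ε := by push_cast; ring
      _ ≤ (n + 2) * ε := mul_le_mul_of_nonneg_right (by exact_mod_cast hlow) hε0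
  have hm : (m : ℝ) ≤ n + 1 + 2 * L := by exact_mod_cast (show m ≤ n + 1 + 2 * L by omega)
  refine le_trans ?_ (neg_le_birk hc hε hε0 m p)
  linarith [mul_le_mul_of_nonneg_left hvisits' hc0, mul_le_mul_of_nonneg_left hm hε0]

lemma zCount_le_sum_Zab {φ : Shift Mtr → ℝ} {a q L M : ℕ} {c ε : ℝ}
    (hL : ∀ b ≤ q, (∃ x : Shift Mtr, x.val 0 = b) →
      ReachesWithin Mtr L a b ∧ ReachesWithin Mtr L b a)
    (hc : ∀ y, |φ y| ≤ c) (hε : ∀ y : Shift Mtr, q < y.val 0 → |φ y| ≤ ε) (hε0 : 0 ≤ ε)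
    (hM : c ≤ M * ε) (n : ℕ) :
    zCount Mtr q M n ≤ ENNReal.ofReal (Real.exp (2 * L * c + (2 * L + 3) * ε + 2 * n * ε)) *
      ∑ jk ∈ Finset.Icc 1 L ×ˢ Finset.Icc 1 L, Zab Mtr φ a (n + 1 + jk.1 + jk.2) := by
  set T := Finset.Icc 1 L ×ˢ Finset.Icc 1 L
  set K := 2 * L * c + (2 * L + 3) * ε + 2 * n * ε
  obtain ⟨S, hS, hmem⟩ := exists_zCount_eq_encard Mtr q M n
  have hF : ∀ w : S, ∃ s : Σ jk : T,
      {p : Shift Mtr // (shiftMap Mtr)^[n + 1 + jk.1.1 + jk.1.2] p = p ∧ p.val 0 = a},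
      (∀ i : Fin (n + 2), s.2.1.val (s.1.1.1 + i) = w.1 i) ∧
      1 ≤ ENNReal.ofReal (Real.exp K) *
        ENNReal.ofReal (Real.exp (birk Mtr φ (n + 1 + s.1.1.1 + s.1.1.2) s.2.1)) := by
    rintro ⟨w, hw⟩
    obtain ⟨x, hxw, hx0, hxn, hlow⟩ := hmem w hw
    obtain ⟨jk, hjk, p, hper, hp0, hpx⟩ := exists_periodic_through hL x hx0 hxn
    obtain ⟨⟨-, hjL⟩, hk, hkL⟩ : (1 ≤ jk.1 ∧ jk.1 ≤ L) ∧ 1 ≤ jk.2 ∧ jk.2 ≤ L := by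
      simpa [T] using hjk
    refine ⟨⟨⟨jk, hjk⟩, p, hper, hp0⟩, fun i => (hpx i i.2).trans (hxw i), ?_⟩
    rw [← ENNReal.ofReal_mul (Real.exp_nonneg _), ← Real.exp_add, ← ENNReal.ofReal_one]
    refine ENNReal.ofReal_le_ofReal (Real.one_le_exp ?_)
    linarith [neg_le_birk_of_follows hc hε hε0 hM hjL hk hkL hpx hlow]
  choose F hFw hFb using hF
  have hinj : Function.Injective F := fun w w' h =>
    Subtype.ext (funext fun i => by rw [← hFw w i, ← hFw w' i, h])
  calc zCount Mtr q M n = S.encard := hS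
    _ ≤ ∑' s : Σ jk : T,
        {p : Shift Mtr // (shiftMap Mtr)^[n + 1 + jk.1.1 + jk.1.2] p = p ∧ p.val 0 = a},
        ENNReal.ofReal (Real.exp K) *
          ENNReal.ofReal (Real.exp (birk Mtr φ (n + 1 + s.1.1.1 + s.1.1.2) s.2.1)) :=
      encard_le_tsum_of_injective F hinj hFb
    _ = ENNReal.ofReal (Real.exp K) * ∑ jk ∈ T, Zab Mtr φ a (n + 1 + jk.1 + jk.2) := by
      rw [ENNReal.tsum_mul_left, ENNReal.tsum_sigma', ← Finset.tsum_subtype]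
      rfl

lemma inv_mul_log_le_iff {t : ℝ} (ht : 0 < t) {x : ℝ≥0∞} {z : ℝ} :
    ((t⁻¹ : ℝ) : EReal) * ENNReal.log x ≤ z ↔ x ≤ ENNReal.ofReal (Real.exp (t * z)) := by
  rw [EReal.coe_inv, ← EReal.div_eq_inv_mul,
    EReal.div_le_iff_le_mul (by exact_mod_cast ht) (EReal.coe_ne_top t), ← EReal.coe_mul,
    ← ENNReal.log_le_log_iff, ENNReal.log_ofReal_of_pos (Real.exp_pos _), Real.log_exp]

lemma eventually_le_exp_of_growthSup_lt {u : ℕ → ℝ≥0∞} {r : ℝ} (h : growthSup u < r) :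
    ∀ᶠ n : ℕ in atTop, u n ≤ ENNReal.ofReal (Real.exp (n * r)) := by
  filter_upwards [eventually_lt_of_limsup_lt h, eventually_gt_atTop 0] with n hn hn0
  exact (inv_mul_log_le_iff (by positivity)).1 hn.le

lemma growthSup_le_of_eventually_le {u : ℕ → ℝ≥0∞} {C s : ℝ}
    (h : ∀ᶠ n : ℕ in atTop, u n ≤ ENNReal.ofReal (C * Real.exp (n * s))) : growthSup u ≤ s := by
  refine EReal.le_of_forall_lt_iff_le.1 fun z hz => ?_
  have hsz : 0 < z - s := sub_pos.2 (EReal.coe_lt_coe_iff.1 hz)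
  have hC : ∀ᶠ n : ℕ in atTop, C ≤ Real.exp (n * (z - s)) :=
    (Real.tendsto_exp_atTop.comp
      (tendsto_natCast_atTop_atTop.atTop_mul_const hsz)).eventually_ge_atTop C
  refine limsup_le_of_le (by isBoundedDefault) ?_
  filter_upwards [h, hC, eventually_gt_atTop 0] with n hn hCn hn0
  refine (inv_mul_log_le_iff (by positivity)).2 (hn.trans (ENNReal.ofReal_le_ofReal ?_))
  calc C * Real.exp (n * s) ≤ Real.exp (n * (z - s)) * Real.exp (n * s) := by gcongr
    _ = Real.exp (n * z) := by rw [← Real.exp_add]; ring_nf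

lemma exists_forall_abs_le_of_tendsto_sSup {φ : Shift Mtr → ℝ} (hb : ∃ C : ℝ, ∀ x, |φ x| ≤ C)
    (hvanish : Tendsto (fun m : ℕ => sSup {r : ℝ | ∃ x : Shift Mtr, x.val 0 = m ∧ r = |φ x|})
      atTop (𝓝 0)) {ε : ℝ} (hε : 0 < ε) :
    ∃ q : ℕ, ∀ y : Shift Mtr, q < y.val 0 → |φ y| ≤ ε := by
  obtain ⟨C, hC⟩ := hb
  obtain ⟨q, hq⟩ := eventually_atTop.1 (hvanish.eventually_le_const hε)
  refine ⟨q, fun y hy => le_trans ?_ (hq _ hy.le)⟩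
  refine le_csSup ⟨C, ?_⟩ ⟨y, rfl, rfl⟩
  rintro _ ⟨x, -, rfl⟩
  exact hC x

lemma deltaMQ_le_of_pressure_lt {φ : Shift Mtr → ℝ} {a q L M : ℕ} {c ε r : ℝ}
    (hL : ∀ b ≤ q, (∃ x : Shift Mtr, x.val 0 = b) →
      ReachesWithin Mtr L a b ∧ ReachesWithin Mtr L b a)
    (hc : ∀ y, |φ y| ≤ c) (hε : ∀ y : Shift Mtr, q < y.val 0 → |φ y| ≤ ε) (hε0 : 0 ≤ ε)
    (hM : c ≤ M * ε) (hr : pressure Mtr φ a < r) : deltaMQ Mtr M q ≤ ((r + 2 * ε : ℝ) : EReal) := by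
  obtain ⟨N, hN⟩ := eventually_atTop.1 (eventually_le_exp_of_growthSup_lt (u := Zab Mtr φ a) hr)
  set K := 2 * L * c + (2 * L + 3) * ε
  set D := (1 + 2 * L) * |r|
  refine growthSup_le_of_eventually_le (C := (L * L : ℕ) * Real.exp (K + D)) ?_
  filter_upwards [eventually_ge_atTop N] with n hn
  have hZ : ∀ jk ∈ Finset.Icc 1 L ×ˢ Finset.Icc 1 L,
      Zab Mtr φ a (n + 1 + jk.1 + jk.2) ≤ ENNReal.ofReal (Real.exp (n * r + D)) := by
    intro jk hjk
    obtain ⟨⟨-, hjL⟩, -, hkL⟩ : (1 ≤ jk.1 ∧ jk.1 ≤ L) ∧ 1 ≤ jk.2 ∧ jk.2 ≤ L := by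
      simpa using hjk
    refine (hN _ (by omega)).trans (ENNReal.ofReal_le_ofReal (Real.exp_le_exp.2 ?_))
    have hd : ((1 + jk.1 + jk.2 : ℕ) : ℝ) ≤ 1 + 2 * L := by exact_mod_cast (by omega)
    calc ((n + 1 + jk.1 + jk.2 : ℕ) : ℝ) * r = n * r + ((1 + jk.1 + jk.2 : ℕ) : ℝ) * r := by
          push_cast; ring
      _ ≤ n * r + D := (add_le_add_iff_left _).2 ((mul_le_mul_of_nonneg_left (le_abs_self r)
          (Nat.cast_nonneg _)).trans (mul_le_mul_of_nonneg_right hd (abs_nonneg r)))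
  calc zCount Mtr q M n
      ≤ ENNReal.ofReal (Real.exp (K + 2 * n * ε)) *
          ∑ jk ∈ Finset.Icc 1 L ×ˢ Finset.Icc 1 L, Zab Mtr φ a (n + 1 + jk.1 + jk.2) :=
        zCount_le_sum_Zab hL hc hε hε0 hM n
    _ ≤ ENNReal.ofReal (Real.exp (K + 2 * n * ε)) *
          ((L * L : ℕ) * ENNReal.ofReal (Real.exp (n * r + D))) := by
        gcongr
        refine (sum_le_sum hZ).trans_eq ?_
        rw [sum_const, card_product, Nat.card_Icc, Nat.add_sub_cancel, nsmul_eq_mul]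
    _ = ENNReal.ofReal ((L * L : ℕ) * Real.exp (K + D) * Real.exp (n * (r + 2 * ε))) := by
        rw [← ENNReal.ofReal_natCast, ← ENNReal.ofReal_mul (by positivity),
          ← ENNReal.ofReal_mul (by positivity)]
        congr 1
        rw [mul_left_comm, ← Real.exp_add, mul_assoc _ (Real.exp (K + D)), ← Real.exp_add]
        congr 2
        ring

end

theorem deltaInf_le_pressure_general (Mtr : ℕ → ℕ → Prop) (hT : IsTransitive Mtr)
    (φ : Shift Mtr → ℝ)
    (hb : ∃ C : ℝ, ∀ x, |φ x| ≤ C)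
    (hvanish : Tendsto (fun m : ℕ => sSup {r : ℝ | ∃ x : Shift Mtr, x.val 0 = m ∧ r = |φ x|})
      atTop (𝓝 0)) :
    ∀ a : ℕ, (∃ x : Shift Mtr, x.val 0 = a) → deltaInf Mtr ≤ pressure Mtr φ a := by
  intro a ha
  refine EReal.le_of_forall_lt_iff_le.1 fun z hz => ?_
  obtain ⟨r, hr, hrz⟩ := EReal.exists_between_coe_real hz
  obtain ⟨ε, hε, rfl⟩ : ∃ ε > 0, z = r + 2 * ε :=
    ⟨(z - r) / 2, by linarith [EReal.coe_lt_coe_iff.1 hrz], by ring⟩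
  obtain ⟨q, hq⟩ := exists_forall_abs_le_of_tendsto_sSup hb hvanish hε
  obtain ⟨c, hc⟩ := hb
  obtain ⟨L, hL⟩ := hT.exists_reachesWithin ha q
  obtain ⟨M, hM⟩ : ∃ M : ℕ, c ≤ M * ε := by
    obtain ⟨M, hM⟩ := exists_nat_ge (c / ε)
    exact ⟨M, (div_le_iff₀ hε).1 hM⟩
  exact (iInf_le _ M).trans ((iInf_le _ q).trans (deltaMQ_le_of_pressure_lt hL hc hq hε.le hM hr))

/-- for a transitive finite-entropy CMS and a bounded summable-variations
potential vanishing at infinity, `P_G(φ) ≥ δ_∞`. -/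
theorem deltaInf_le_pressure (Mtr : ℕ → ℕ → Prop) (hT : IsTransitive Mtr)
    (hfin : topEnt Mtr < ⊤) (φ : Shift Mtr → ℝ)
    (hb : ∃ C : ℝ, ∀ x, |φ x| ≤ C) (hv : SummableVars Mtr φ)
    (hvanish : Tendsto (fun m : ℕ => sSup {r : ℝ | ∃ x : Shift Mtr, x.val 0 = m ∧ r = |φ x|})
      atTop (𝓝 0)) :
    ∀ a : ℕ, (∃ x : Shift Mtr, x.val 0 = a) → deltaInf Mtr ≤ pressure Mtr φ a :=
  deltaInf_le_pressure_general Mtr hT φ hb hvanish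

end CMSPaper
end
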